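/- Let G be a 2-connected K_{1,4}-free split graph with maximum clique K, |K| ≥ |I| ≥ 8, Δ^I = 3, no short cycles, and let 𝕮 be the collection of maximal alternating paths in G − N^I(v). If 𝕮 contains no path on 7 or more vertices, then it contains at most two paths on 5 vertices. -/

import Mathlib

open SimpleGraph

variable {V : Type*}

/-- `I` is an independent set in `G`. -/
def IndepOn (G : SimpleGraph V) (I : Set V) : Prop :=
  ∀ ⦃u⦄, u ∈ I → ∀ ⦃v⦄, v ∈ I → ¬ G.Adj u v

/-- `(K, I)` is a split partition of `G`: `K` a clique, `I` independent,
partitioning the vertex set. -/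
def SplitPartition (G : SimpleGraph V) (K I : Set V) : Prop :=
  Disjoint K I ∧ K ∪ I = Set.univ ∧ G.IsClique K ∧ IndepOn G I

/-- `K` is a maximum clique of `G`. -/
def MaxClique (G : SimpleGraph V) (K : Set V) : Prop :=
  G.IsClique K ∧ ∀ K' : Set V, G.IsClique K' → K'.ncard ≤ K.ncard

/-- `G` has no induced copy of the star `K_{1,n}` (center plus `n` pairwise
nonadjacent leaves). -/
def StarFree (G : SimpleGraph V) (n : ℕ) : Prop :=
  ¬ ∃ (c : V) (L : Finset V), L.card = n ∧ c ∉ L ∧ (∀ l ∈ L, G.Adj c l) ∧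
      (∀ l ∈ L, ∀ m ∈ L, l ≠ m → ¬ G.Adj l m)

/-- `G` is 2-connected: at least 3 vertices and deleting any single vertex
leaves a connected graph. -/
def TwoConnected (G : SimpleGraph V) [Fintype V] : Prop :=
  3 ≤ Fintype.card V ∧ ∀ v : V, (G.induce (({v} : Set V)ᶜ)).Connected

/-- The bipartite subgraph `H` of `G` on `V_a = {u ∈ I : deg u = 2}` and
`V_b = N(V_a)`: its edges are exactly the edges of `G` incident to a degree-2
vertex of `I`. -/
def shortSub (G : SimpleGraph V) (I : Set V) : SimpleGraph V where
  Adj x y := G.Adj x y ∧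
    ((x ∈ I ∧ (G.neighborSet x).ncard = 2) ∨ (y ∈ I ∧ (G.neighborSet y).ncard = 2))
  symm := ⟨fun x y h => ⟨h.1.symm, h.2.symm⟩⟩
  loopless := ⟨fun x h => G.loopless.irrefl x h.1⟩

/-- `G` has a short cycle: an induced cycle in the bipartite subgraph
`shortSub G I` missing at least one vertex of `K`. -/
def HasShortCycle (G : SimpleGraph V) (K I : Set V) : Prop :=
  ∃ (n : ℕ) (f : cycleGraph n ↪g shortSub G I), 3 ≤ n ∧ ∃ k ∈ K, k ∉ Set.range ⇑f

/-- `(w, x)` describes an alternating path `w 0, x 0, w 1, x 1, …, w (j-1)`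
in `G - A` with the `j` vertices `w i` in `K` and the `j - 1` vertices `x i`
in `I`, all distinct and avoiding `A`. -/
def IsAltPath (G : SimpleGraph V) (K I A : Set V) (j : ℕ) (w x : ℕ → V) : Prop :=
  2 ≤ j ∧
  (∀ i < j, w i ∈ K ∧ w i ∉ A) ∧
  (∀ i < j - 1, x i ∈ I ∧ x i ∉ A) ∧
  (∀ i < j, ∀ k < j, w i = w k → i = k) ∧
  (∀ i < j - 1, ∀ k < j - 1, x i = x k → i = k) ∧
  (∀ i < j, ∀ k < j - 1, w i ≠ x k) ∧
  (∀ i < j - 1, G.Adj (w i) (x i) ∧ G.Adj (w (i + 1)) (x i))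

/-- The vertex set of the alternating path `(w, x)` with `j` clique vertices. -/
def altPathVerts (j : ℕ) (w x : ℕ → V) : Set V :=
  {u | ∃ i < j, u = w i} ∪ {u | ∃ i < j - 1, u = x i}

/-! Write `A = N(v) ∩ I`. In a `K_{1,4}`-free split graph, every vertex of `K` is adjacent to one of
any three `I`-neighbours of a clique vertex; in particular every vertex of `K` sees `A`. So the
middle vertex of a 5-vertex path, whose two `I`-vertices `x₀, x₁` avoid `A`, has `I`-neighbourhood
exactly `{x₀, x₁, a}` with `a ∈ A`, and every vertex of `K` sees `x₀`, `x₁` or `a`. The middle vertex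
of a second, disjoint path must therefore see `a`, so disjoint paths share the same `a`. Given three
pairwise disjoint paths, a vertex of `K` missing `a` would see an `I`-vertex of each path and a
vertex of `A`, four `I`-neighbours in all; hence `a` is adjacent to all of `K`, and `K ∪ {a}` is a
larger clique. -/

theorem StarFree.exists_adj_of_card_eq {G : SimpleGraph V} {n : ℕ} (hfree : StarFree G (n + 1))
    {S : Finset V} (hS : S.card = n) (hind : (S : Set V).Pairwise fun a b => ¬ G.Adj a b)
    {c u : V} (hcS : ∀ s ∈ S, G.Adj c s) (hcu : G.Adj c u) (huS : u ∉ S) :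
    ∃ s ∈ S, G.Adj u s := by
  classical
  by_contra! hu
  refine hfree ⟨c, insert u S, by rw [Finset.card_insert_of_notMem huS, hS], ?_, ?_, ?_⟩
  · intro hc
    rcases Finset.mem_insert.mp hc with rfl | hc
    · exact G.loopless.irrefl _ hcu
    · exact G.loopless.irrefl _ (hcS c hc)
  · intro l hl
    rcases Finset.mem_insert.mp hl with rfl | hl
    exacts [hcu, hcS l hl]
  · intro l hl m hm hlm
    rcases Finset.mem_insert.mp hl with rfl | hl <;> rcases Finset.mem_insert.mp hm with hmu | hm
    · exact absurd hmu.symm hlm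
    · exact hu m hm
    · exact hmu ▸ fun h => hu l hl h.symm
    · exact hind hl hm hlm

theorem StarFree.exists_adj_of_ncard_neighborSet_inter_eq {G : SimpleGraph V} {I : Set V} {n : ℕ}
    (hfree : StarFree G (n + 2)) (hI : IndepOn G I) {c u : V}
    (hc : (G.neighborSet c ∩ I).ncard = n + 1) (hcu : G.Adj c u) (hu : u ∉ I) :
    ∃ y ∈ G.neighborSet c ∩ I, G.Adj u y := by
  have hfin := Set.finite_of_ncard_ne_zero (s := G.neighborSet c ∩ I) (by omega)
  obtain ⟨y, hy, huy⟩ := hfree.exists_adj_of_card_eq (S := hfin.toFinset)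
    (by rw [← Set.ncard_eq_toFinset_card _ hfin, hc])
    (by rw [hfin.coe_toFinset]; exact fun a ha b hb _ => hI ha.2 hb.2)
    (fun s hs => ((hfin.mem_toFinset).mp hs).1) hcu
    (fun h => hu ((hfin.mem_toFinset).mp h).2)
  exact ⟨y, hfin.mem_toFinset.mp hy, huy⟩

theorem MaxClique.exists_not_adj [Finite V] {G : SimpleGraph V} {K : Set V} (hmax : MaxClique G K)
    {a : V} (ha : a ∉ K) : ∃ u ∈ K, ¬ G.Adj u a := by
  by_contra! hall
  have hclique : G.IsClique (insert a K) :=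
    hmax.1.insert fun u hu _ => (hall u hu).symm
  have := hmax.2 _ hclique
  rw [Set.ncard_insert_of_notMem ha] at this
  omega

theorem x_ne_of_disjoint_altPathVerts {j j' i k : ℕ} {w x w' x' : ℕ → V}
    (hd : Disjoint (altPathVerts j w x) (altPathVerts j' w' x')) (hi : i < j - 1)
    (hk : k < j' - 1) : x i ≠ x' k := fun h =>
  Set.disjoint_left.mp hd (Or.inr ⟨i, hi, rfl⟩) (Or.inr ⟨k, hk, h⟩)

namespace IsAltPath

variable {G : SimpleGraph V} {K I A : Set V} {j i k : ℕ} {w x : ℕ → V}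

theorem w_mem (hP : IsAltPath G K I A j w x) (hi : i < j) : w i ∈ K := (hP.2.1 i hi).1

theorem x_mem (hP : IsAltPath G K I A j w x) (hi : i < j - 1) : x i ∈ I := (hP.2.2.1 i hi).1

theorem x_notMem (hP : IsAltPath G K I A j w x) (hi : i < j - 1) : x i ∉ A := (hP.2.2.1 i hi).2

theorem x_ne (hP : IsAltPath G K I A j w x) (hi : i < j - 1) (hk : k < j - 1) (hik : i ≠ k) :
    x i ≠ x k := fun h => hik (hP.2.2.2.2.1 i hi k hk h)

theorem adj_x (hP : IsAltPath G K I A j w x) (hi : i < j - 1) : G.Adj (w i) (x i) :=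
  (hP.2.2.2.2.2.2 i hi).1

theorem adj_succ_x (hP : IsAltPath G K I A j w x) (hi : i < j - 1) : G.Adj (w (i + 1)) (x i) :=
  (hP.2.2.2.2.2.2 i hi).2

theorem ncard_x_zero_x_one_insert (hP : IsAltPath G K I A 3 w x) {a : V} (ha : a ∈ A) :
    ({x 0, x 1, a} : Set V).ncard = 3 :=
  Set.ncard_eq_three.mpr ⟨_, _, _, hP.x_ne (by norm_num) (by norm_num) (by norm_num),
    fun h => hP.x_notMem (i := 0) (by norm_num) (h ▸ ha),
    fun h => hP.x_notMem (i := 1) (by norm_num) (h ▸ ha), rfl⟩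

theorem eq_of_disjoint_altPathVerts {wP xP wQ xQ : ℕ → V} (hP : IsAltPath G K I A 3 wP xP)
    (hQ : IsAltPath G K I A 3 wQ xQ)
    (hd : Disjoint (altPathVerts 3 wP xP) (altPathVerts 3 wQ xQ)) {a b : V} (ha : a ∈ A)
    (haI : a ∈ I) (hdom : ∀ u ∈ K, G.Adj u a ∨ ∃ i < 2, G.Adj u (xP i)) (hb : b ∈ A)
    (hN : G.neighborSet (wQ 1) ∩ I = {xQ 0, xQ 1, b}) : a = b := by
  have hmem : ∀ y ∈ I, G.Adj (wQ 1) y → y = xQ 0 ∨ y = xQ 1 ∨ y = b :=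
    fun y hy h => (hN ▸ ⟨h, hy⟩ : y ∈ ({xQ 0, xQ 1, b} : Set V))
  rcases hdom _ (hQ.w_mem (i := 1) (by norm_num)) with h | ⟨i, hi, h⟩
  · rcases hmem a haI h with h | h | h
    · exact absurd (h ▸ ha) (hQ.x_notMem (by norm_num))
    · exact absurd (h ▸ ha) (hQ.x_notMem (by norm_num))
    · exact h
  · rcases hmem _ (hP.x_mem hi) h with h | h | h
    · exact absurd h (x_ne_of_disjoint_altPathVerts hd hi (by norm_num))
    · exact absurd h (x_ne_of_disjoint_altPathVerts hd hi (by norm_num))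
    · exact absurd (h ▸ hb) (hP.x_notMem hi)

end IsAltPath

namespace SplitPartition

variable {G : SimpleGraph V} {K I : Set V}

theorem notMem_right (hsplit : SplitPartition G K I) {u : V} (hu : u ∈ K) : u ∉ I :=
  Set.disjoint_left.mp hsplit.1 hu

theorem notMem_left (hsplit : SplitPartition G K I) {u : V} (hu : u ∈ I) : u ∉ K :=
  Set.disjoint_right.mp hsplit.1 hu

theorem exists_adj_of_ncard_eq_three (hsplit : SplitPartition G K I) (hfree : StarFree G 4)
    {m u : V} (hm : m ∈ K) (hdeg : (G.neighborSet m ∩ I).ncard = 3) (hu : u ∈ K) :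
    ∃ y ∈ G.neighborSet m ∩ I, G.Adj u y := by
  by_cases hum : u = m
  · obtain ⟨y, hy⟩ := Set.nonempty_of_ncard_ne_zero (s := G.neighborSet m ∩ I) (by omega)
    exact ⟨y, hy, hum ▸ hy.1⟩
  · exact hfree.exists_adj_of_ncard_neighborSet_inter_eq (n := 2) hsplit.2.2.2 hdeg
      (hsplit.2.2.1 hm hu (Ne.symm hum)) (hsplit.notMem_right hu)

variable {v : V} {w x : ℕ → V}

theorem adj_or_exists_adj_of_neighborSet_inter_middle_eq (hsplit : SplitPartition G K I)
    (hfree : StarFree G 4) (hP : IsAltPath G K I (G.neighborSet v ∩ I) 3 w x) {a : V}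
    (ha : a ∈ G.neighborSet v ∩ I) (hN : G.neighborSet (w 1) ∩ I = {x 0, x 1, a}) :
    ∀ u ∈ K, G.Adj u a ∨ ∃ i < 2, G.Adj u (x i) := by
  intro u hu
  have hdeg : (G.neighborSet (w 1) ∩ I).ncard = 3 := hN ▸ hP.ncard_x_zero_x_one_insert ha
  obtain ⟨y, hy, huy⟩ :=
    hsplit.exists_adj_of_ncard_eq_three hfree (hP.w_mem (by norm_num)) hdeg hu
  rw [hN] at hy
  rcases hy with rfl | rfl | rfl
  exacts [Or.inr ⟨0, by norm_num, huy⟩, Or.inr ⟨1, by norm_num, huy⟩, Or.inl huy]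

theorem exists_neighborSet_inter_middle_eq [Finite V] (hsplit : SplitPartition G K I)
    (hfree : StarFree G 4) (hv : v ∈ K) (hdeg : (G.neighborSet v ∩ I).ncard = 3)
    (hP : IsAltPath G K I (G.neighborSet v ∩ I) 3 w x)
    (hub : (G.neighborSet (w 1) ∩ I).ncard ≤ 3) :
    ∃ a ∈ G.neighborSet v ∩ I, G.neighborSet (w 1) ∩ I = {x 0, x 1, a} := by
  obtain ⟨a, ha, hwa⟩ := hsplit.exists_adj_of_ncard_eq_three hfree hv hdeg
    (hP.w_mem (i := 1) (by norm_num))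
  refine ⟨a, ha, (Set.eq_of_subset_of_ncard_le ?_ ?_).symm⟩
  · rintro y (rfl | rfl | rfl)
    exacts [⟨hP.adj_succ_x (by norm_num), hP.x_mem (by norm_num)⟩,
      ⟨hP.adj_x (by norm_num), hP.x_mem (by norm_num)⟩, ⟨hwa, ha.2⟩]
  · exact (hP.ncard_x_zero_x_one_insert ha).symm ▸ hub

theorem adj_of_three_disjoint_altPathVerts [Finite V] (hsplit : SplitPartition G K I)
    (hfree : StarFree G 4) (hv : v ∈ K) (hdeg : (G.neighborSet v ∩ I).ncard = 3)
    {w₁ x₁ w₂ x₂ w₃ x₃ : ℕ → V} (hP₁ : IsAltPath G K I (G.neighborSet v ∩ I) 3 w₁ x₁)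
    (hP₂ : IsAltPath G K I (G.neighborSet v ∩ I) 3 w₂ x₂)
    (hP₃ : IsAltPath G K I (G.neighborSet v ∩ I) 3 w₃ x₃)
    (hd₁₂ : Disjoint (altPathVerts 3 w₁ x₁) (altPathVerts 3 w₂ x₂))
    (hd₁₃ : Disjoint (altPathVerts 3 w₁ x₁) (altPathVerts 3 w₃ x₃))
    (hd₂₃ : Disjoint (altPathVerts 3 w₂ x₂) (altPathVerts 3 w₃ x₃)) {a u : V}
    (hdom₁ : ∀ u ∈ K, G.Adj u a ∨ ∃ i < 2, G.Adj u (x₁ i))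
    (hdom₂ : ∀ u ∈ K, G.Adj u a ∨ ∃ i < 2, G.Adj u (x₂ i))
    (hdom₃ : ∀ u ∈ K, G.Adj u a ∨ ∃ i < 2, G.Adj u (x₃ i)) (hu : u ∈ K)
    (hub : (G.neighborSet u ∩ I).ncard ≤ 3) : G.Adj u a := by
  by_contra hua
  obtain ⟨i₁, hi₁, h₁⟩ := (hdom₁ u hu).resolve_left hua
  obtain ⟨i₂, hi₂, h₂⟩ := (hdom₂ u hu).resolve_left hua
  obtain ⟨i₃, hi₃, h₃⟩ := (hdom₃ u hu).resolve_left hua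
  have hN : ({x₁ i₁, x₂ i₂, x₃ i₃} : Set V) = G.neighborSet u ∩ I := by
    refine Set.eq_of_subset_of_ncard_le ?_ ?_
    · rintro y (rfl | rfl | rfl)
      exacts [⟨h₁, hP₁.x_mem hi₁⟩, ⟨h₂, hP₂.x_mem hi₂⟩, ⟨h₃, hP₃.x_mem hi₃⟩]
    · rw [Set.ncard_eq_three.mpr ⟨_, _, _, x_ne_of_disjoint_altPathVerts hd₁₂ hi₁ hi₂,
        x_ne_of_disjoint_altPathVerts hd₁₃ hi₁ hi₃, x_ne_of_disjoint_altPathVerts hd₂₃ hi₂ hi₃,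
        rfl⟩]
      exact hub
  obtain ⟨b, hb, hb'⟩ := hsplit.exists_adj_of_ncard_eq_three hfree hv hdeg hu
  have hbN : b ∈ ({x₁ i₁, x₂ i₂, x₃ i₃} : Set V) := hN ▸ ⟨hb', hb.2⟩
  rcases hbN with rfl | rfl | rfl
  exacts [hP₁.x_notMem hi₁ hb, hP₂.x_notMem hi₂ hb, hP₃.x_notMem hi₃ hb]

end SplitPartition

theorem at_most_two_five_vertex_paths_general [Fintype V] (G : SimpleGraph V)
    (K I : Set V) (hsplit : SplitPartition G K I) (hmax : MaxClique G K)
    (hfree : StarFree G 4)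
    (hub : ∀ u ∈ K, (G.neighborSet u ∩ I).ncard ≤ 3)
    (v : V) (hv : v ∈ K) (hdeg : (G.neighborSet v ∩ I).ncard = 3) :
    (¬ ∃ j, 4 ≤ j ∧ ∃ w x : ℕ → V,
        IsAltPath G K I (G.neighborSet v ∩ I) j w x) →
    ¬ ∃ (w₁ x₁ w₂ x₂ w₃ x₃ : ℕ → V),
        IsAltPath G K I (G.neighborSet v ∩ I) 3 w₁ x₁ ∧
        IsAltPath G K I (G.neighborSet v ∩ I) 3 w₂ x₂ ∧
        IsAltPath G K I (G.neighborSet v ∩ I) 3 w₃ x₃ ∧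
        Disjoint (altPathVerts 3 w₁ x₁) (altPathVerts 3 w₂ x₂) ∧
        Disjoint (altPathVerts 3 w₁ x₁) (altPathVerts 3 w₃ x₃) ∧
        Disjoint (altPathVerts 3 w₂ x₂) (altPathVerts 3 w₃ x₃) := by
  rintro - ⟨w₁, x₁, w₂, x₂, w₃, x₃, hP₁, hP₂, hP₃, hd₁₂, hd₁₃, hd₂₃⟩
  have hmiddle {w x : ℕ → V} (hP : IsAltPath G K I (G.neighborSet v ∩ I) 3 w x) :=
    hsplit.exists_neighborSet_inter_middle_eq hfree hv hdeg hP (hub _ (hP.w_mem (by norm_num)))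
  obtain ⟨a, ha, hN₁⟩ := hmiddle hP₁
  obtain ⟨a₂, ha₂, hN₂⟩ := hmiddle hP₂
  obtain ⟨a₃, ha₃, hN₃⟩ := hmiddle hP₃
  have hdom₁ := hsplit.adj_or_exists_adj_of_neighborSet_inter_middle_eq hfree hP₁ ha hN₁
  obtain rfl : a = a₂ := hP₁.eq_of_disjoint_altPathVerts hP₂ hd₁₂ ha ha.2 hdom₁ ha₂ hN₂
  obtain rfl : a = a₃ := hP₁.eq_of_disjoint_altPathVerts hP₃ hd₁₃ ha ha.2 hdom₁ ha₃ hN₃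
  have hdom₂ := hsplit.adj_or_exists_adj_of_neighborSet_inter_middle_eq hfree hP₂ ha hN₂
  have hdom₃ := hsplit.adj_or_exists_adj_of_neighborSet_inter_middle_eq hfree hP₃ ha hN₃
  obtain ⟨u, hu, hua⟩ := hmax.exists_not_adj (hsplit.notMem_left ha.2)
  exact hua (hsplit.adj_of_three_disjoint_altPathVerts hfree hv hdeg hP₁ hP₂ hP₃ hd₁₂ hd₁₃ hd₂₃
    hdom₁ hdom₂ hdom₃ hu (hub u hu))

/-- If the collection of alternating paths contains no path on 7 or more
vertices (`j ≥ 4`), then it contains at most two paths on 5 vertices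
(`j = 3`): no three pairwise disjoint 5-vertex paths exist. -/
theorem at_most_two_five_vertex_paths [Fintype V] (G : SimpleGraph V)
    (K I : Set V) (hsplit : SplitPartition G K I) (hmax : MaxClique G K)
    (h2 : TwoConnected G) (hfree : StarFree G 4)
    (hI : 8 ≤ I.ncard) (hKI : I.ncard ≤ K.ncard)
    (hub : ∀ u ∈ K, (G.neighborSet u ∩ I).ncard ≤ 3)
    (v : V) (hv : v ∈ K) (hdeg : (G.neighborSet v ∩ I).ncard = 3)
    (hshort : ¬ HasShortCycle G K I) :
    (¬ ∃ j, 4 ≤ j ∧ ∃ w x : ℕ → V,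
        IsAltPath G K I (G.neighborSet v ∩ I) j w x) →
    ¬ ∃ (w₁ x₁ w₂ x₂ w₃ x₃ : ℕ → V),
        IsAltPath G K I (G.neighborSet v ∩ I) 3 w₁ x₁ ∧
        IsAltPath G K I (G.neighborSet v ∩ I) 3 w₂ x₂ ∧
        IsAltPath G K I (G.neighborSet v ∩ I) 3 w₃ x₃ ∧
        Disjoint (altPathVerts 3 w₁ x₁) (altPathVerts 3 w₂ x₂) ∧
        Disjoint (altPathVerts 3 w₁ x₁) (altPathVerts 3 w₃ x₃) ∧
        Disjoint (altPathVerts 3 w₂ x₂) (altPathVerts 3 w₃ x₃) :=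
  at_most_two_five_vertex_paths_general G K I hsplit hmax hfree hub v hv hdeg
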